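/- Fix l ≥ 1 and b ≥ 1, and let Y_{-l+1}, Y_{-l+2}, ... be a real sequence in [0,1] with moving averages X_i = (1/l)Σ_{j=1}^l Y_{i-j}. Define estimates Ŷ_i recursively from the quantized values [X_{i+1}]_b and the initial values Y_{-l+1}^{-1} as in the recursion Ŷ_i = l[X_{i+1}]_b − Σ (previous true or estimated Y's). Then the errors E_i = Y_i − Ŷ_i satisfy |E_i| ≤ 2^i · l · 2^{−b} for all i ≥ 0. -/

import Mathlib

/-! Subtracting the decoding recursion from `l X_{i+1} = Y_i + ∑_{j=1}^{l-1} Y_{i-j}` gives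
`E_i = l (X_{i+1} - [X_{i+1}]_b) - ∑_{j=1}^{l-1} E_{i-j}` (with `E_k = 0` for `k < 0`), hence
`|E_i| ≤ l 2^{-b} + ∑_{k<i} |E_k|`. The right-hand side at most doubles from `i` to `i + 1`, and
it equals `l 2^{-b}` at `i = 0`. -/

noncomputable def quantB (b : ℕ) (x : ℝ) : ℝ := ⌊(2 : ℝ) ^ b * x⌋ / 2 ^ b

open Finset

lemma sub_quantB_eq_fract_div (b : ℕ) (x : ℝ) :
    x - quantB b x = Int.fract ((2 : ℝ) ^ b * x) / 2 ^ b := by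
  rw [quantB, Int.fract, sub_div, mul_div_cancel_left₀ _ (by positivity)]

lemma abs_sub_quantB_le (b : ℕ) (x : ℝ) : |x - quantB b x| ≤ (2 : ℝ) ^ (-(b : ℤ)) := by
  rw [sub_quantB_eq_fract_div, abs_of_nonneg (by positivity), zpow_neg, zpow_natCast, ← one_div]
  gcongr
  exact (Int.fract_lt_one _).le

lemma sum_Icc_one_eq_add_sum_Icc_one_pred {M : Type*} [AddCommMonoid M] {l : ℕ} (hl : 1 ≤ l)
    (f : ℕ → M) : ∑ j ∈ Icc 1 l, f j = f 1 + ∑ j ∈ Icc 1 (l - 1), f (j + 1) := by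
  rw [← add_sum_Ioc_eq_sum_Icc hl, ← Icc_add_one_left_eq_Ioc, ← Nat.sub_add_cancel hl,
    ← map_add_right_Icc, sum_map]
  simp

lemma le_two_pow_mul_of_le_add_sum_range {e : ℕ → ℝ} {c : ℝ}
    (he : ∀ i, e i ≤ c + ∑ k ∈ range i, e k) (i : ℕ) : e i ≤ 2 ^ i * c := by
  suffices h : ∀ i, c + ∑ k ∈ range i, e k ≤ 2 ^ i * c from (he i).trans (h i)
  intro i
  induction i with
  | zero => simp
  | succ i ih =>
    rw [sum_range_succ, ← add_assoc, pow_succ]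
    linarith [he i]

lemma sum_Icc_ite_sub_le_sum_range {e : ℕ → ℝ} (he : ∀ k, 0 ≤ e k) (m i : ℕ) :
    ∑ j ∈ Icc 1 m, (if (i : ℤ) - j < 0 then 0 else e (i - j)) ≤ ∑ k ∈ range i, e k := by
  calc ∑ j ∈ Icc 1 m, (if (i : ℤ) - j < 0 then 0 else e (i - j))
      = ∑ j ∈ Icc 1 m with j ≤ i, e (i - j) := by
        rw [sum_filter]
        refine sum_congr rfl fun j _ => ?_
        by_cases hj : j ≤ i <;> simp [hj]
    _ = ∑ k ∈ image (i - ·) {j ∈ Icc 1 m | j ≤ i}, e k := by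
        refine (sum_image fun j hj j' hj' h => ?_).symm
        simp only [coe_filter, mem_Icc, Set.mem_ofPred_eq] at hj hj' h
        omega
    _ ≤ ∑ k ∈ range i, e k := by
        refine sum_le_sum_of_subset_of_nonneg (fun k hk => ?_) fun k _ _ => he k
        simp only [mem_image, mem_filter, mem_Icc, mem_range] at hk ⊢
        omega

section Decoding

def IsMovingAverage (l : ℕ) (Y X : ℤ → ℝ) : Prop :=
  ∀ i : ℤ, X i = (1 / (l : ℝ)) * ∑ j ∈ Icc 1 l, Y (i - j)

def IsQuantizedDecoding (l b : ℕ) (Y X : ℤ → ℝ) (Yhat : ℕ → ℝ) : Prop :=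
  ∀ i : ℕ, Yhat i = l * quantB b (X (i + 1)) -
    ∑ j ∈ Icc 1 (l - 1), (if (i : ℤ) - j < 0 then Y (i - j) else Yhat (i - j))

variable {l b : ℕ} {Y X : ℤ → ℝ} {Yhat : ℕ → ℝ}

lemma IsMovingAverage.mul_apply_add_one (hX : IsMovingAverage l Y X) (hl : 1 ≤ l) (i : ℤ) :
    l * X (i + 1) = Y i + ∑ j ∈ Icc 1 (l - 1), Y (i - j) := by
  have hl0 : (l : ℝ) ≠ 0 := by positivity
  rw [hX, ← mul_assoc, mul_one_div_cancel hl0, one_mul, sum_Icc_one_eq_add_sum_Icc_one_pred hl]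
  push_cast
  ring_nf

lemma IsQuantizedDecoding.sub_eq (hrec : IsQuantizedDecoding l b Y X Yhat)
    (hX : IsMovingAverage l Y X) (hl : 1 ≤ l) (i : ℕ) :
    Y i - Yhat i = l * (X (i + 1) - quantB b (X (i + 1))) -
      ∑ j ∈ Icc 1 (l - 1), (if (i : ℤ) - j < 0 then 0 else Y ↑(i - j) - Yhat (i - j)) := by
  have hterm : ∀ j ∈ Icc 1 (l - 1),
      Y (i - j) - (if (i : ℤ) - j < 0 then Y (i - j) else Yhat (i - j)) =
        if (i : ℤ) - j < 0 then 0 else Y ↑(i - j) - Yhat (i - j) := by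
    intro j _
    split_ifs with h
    · exact sub_self _
    · rw [Nat.cast_sub (by omega)]
  rw [hrec i, mul_sub, hX.mul_apply_add_one hl, ← sum_congr rfl hterm, sum_sub_distrib]
  ring

lemma IsQuantizedDecoding.abs_sub_le (hrec : IsQuantizedDecoding l b Y X Yhat)
    (hX : IsMovingAverage l Y X) (hl : 1 ≤ l) (i : ℕ) :
    |Y i - Yhat i| ≤ l * (2 : ℝ) ^ (-(b : ℤ)) + ∑ k ∈ range i, |Y k - Yhat k| := by
  rw [hrec.sub_eq hX hl]
  refine (abs_sub _ _).trans (add_le_add ?_ ?_)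
  · rw [abs_mul, Nat.abs_cast]
    exact mul_le_mul_of_nonneg_left (abs_sub_quantB_le b _) l.cast_nonneg
  · calc _ ≤ ∑ j ∈ Icc 1 (l - 1), |if (i : ℤ) - j < 0 then 0 else Y ↑(i - j) - Yhat (i - j)| :=
          abs_sum_le_sum_abs _ _
      _ = ∑ j ∈ Icc 1 (l - 1), (if (i : ℤ) - j < 0 then 0 else |Y ↑(i - j) - Yhat (i - j)|) :=
          sum_congr rfl fun j _ => by split_ifs <;> simp
      _ ≤ _ := sum_Icc_ite_sub_le_sum_range (fun k => abs_nonneg (Y k - Yhat k)) _ i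

end Decoding

theorem moving_average_estimate_error_general (l b : ℕ) (hl : 1 ≤ l)
    (Y : ℤ → ℝ)
    (X : ℤ → ℝ) (hX : ∀ i : ℤ, X i = (1 / (l : ℝ)) * ∑ j ∈ Finset.Icc 1 l, Y (i - j))
    (Yhat : ℕ → ℝ)
    (hrec : ∀ i : ℕ, Yhat i = (l : ℝ) * quantB b (X ((i : ℤ) + 1)) -
      ∑ j ∈ Finset.Icc 1 (l - 1),
        (if (i : ℤ) - (j : ℤ) < 0 then Y ((i : ℤ) - (j : ℤ)) else Yhat (i - j))) :
    ∀ i : ℕ, |Y i - Yhat i| ≤ 2 ^ i * l * (2 : ℝ) ^ (-(b : ℤ)) := by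
  intro i
  rw [mul_assoc]
  exact le_two_pow_mul_of_le_add_sum_range (IsQuantizedDecoding.abs_sub_le hrec hX hl) i

/-- Error propagation for recursively decoding a moving-average process from quantized values:
if `X_i = (1/l) Σ_{j=1}^l Y_{i-j}` and the estimates `Ŷ_i` are defined by the recursion
`Ŷ_i = l·[X_{i+1}]_b − Σ_{j=1}^{l-1} (Y_{i-j} if i−j < 0, else Ŷ_{i-j})`, then the errors
`E_i = Y_i − Ŷ_i` satisfy `|E_i| ≤ 2^i · l · 2^{−b}` for all `i ≥ 0`. -/
theorem moving_average_estimate_error (l b : ℕ) (hl : 1 ≤ l) (hb : 1 ≤ b)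
    (Y : ℤ → ℝ) (hY : ∀ i, Y i ∈ Set.Icc (0 : ℝ) 1)
    (X : ℤ → ℝ) (hX : ∀ i : ℤ, X i = (1 / (l : ℝ)) * ∑ j ∈ Finset.Icc 1 l, Y (i - j))
    (Yhat : ℕ → ℝ)
    (hrec : ∀ i : ℕ, Yhat i = (l : ℝ) * quantB b (X ((i : ℤ) + 1)) -
      ∑ j ∈ Finset.Icc 1 (l - 1),
        (if (i : ℤ) - (j : ℤ) < 0 then Y ((i : ℤ) - (j : ℤ)) else Yhat (i - j))) :
    ∀ i : ℕ, |Y i - Yhat i| ≤ 2 ^ i * l * (2 : ℝ) ^ (-(b : ℤ)) :=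
  moving_average_estimate_error_general l b hl Y X hX Yhat hrec
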